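/- arXiv:2103.14510 — 4 statements merged into one kernel-verified Lean document; each statement's English description precedes it below -/
import Mathlib

section
/- Let d ≥ 1, let ρ be a positive semidefinite (d+1)×(d+1) complex matrix with ρ·e_⊥ = 0, and let Π be an arbitrary (d+1)×(d+1) complex matrix. Then tr((Π ⊗ Π) · V ρ V†) = (e_⊥† Π e_⊥) · tr(Π ρ) + e_⊥† Π ρ Π e_⊥, where ⊗ is the Kronecker product. -/
open Matrix Kronecker
open scoped ComplexOrder

/-- The last standard basis vector `e_⊥ = e_d` of `ℂ^{d+1}`. -/
noncomputable def perp (d : ℕ) : Fin (d + 1) → ℂ :=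
  fun i => if i = Fin.last d then 1 else 0

/-- The cloning map `V : ℂ^{d+1} → ℂ^{d+1} ⊗ ℂ^{d+1}`,
`V_{(i,j),k} = (1/√2)(δ_{i,d} δ_{j,k} + δ_{i,k} δ_{j,d})`. -/
noncomputable def cloneV (d : ℕ) : Matrix (Fin (d + 1) × Fin (d + 1)) (Fin (d + 1)) ℂ :=
  fun p k => ((1 / Real.sqrt 2 : ℝ) : ℂ) *
    ((if p.1 = Fin.last d then 1 else 0) * (if p.2 = k then 1 else 0) +
     (if p.1 = k then 1 else 0) * (if p.2 = Fin.last d then 1 else 0))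

/-!
Each column of the cloning map is a symmetrised product state, `V e_k = (e_⊥ ⊗ e_k + e_k ⊗ e_⊥)/√2`,
so `V† (Π ⊗ Π) V = Π_⊥⊥ Π + (Π e_⊥)(e_⊥ᵀ Π)`: pairing `e_⊥ ⊗ e_k` with `e_⊥ ⊗ e_l` (or
`e_k ⊗ e_⊥` with `e_l ⊗ e_⊥`) gives `Π_⊥⊥ Π_kl`, the mixed pairings give `Π_k⊥ Π_⊥l`, and the
factor `1/2` cancels the doubling. Cyclicity of the trace turns `tr((Π ⊗ Π) V ρ V†)` into
`tr(V† (Π ⊗ Π) V ρ)`, which is then the right-hand side.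
-/

theorem Matrix.trace_vecMulVec_col_row_mul {n R : Type*} [Fintype n] [CommSemiring R]
    (A B C : Matrix n n R) (i j : n) :
    trace (vecMulVec (C.col j) (A.row i) * B) = (A * B * C) i j := by
  rw [vecMulVec_mul, trace_vecMulVec, dotProduct_comm, ← dotProduct_mulVec, mul_mul_apply]
  rfl

lemma star_perp_dotProduct_mulVec_perp (d : ℕ) (M : Matrix (Fin (d + 1)) (Fin (d + 1)) ℂ) :
    star (perp d) ⬝ᵥ (M *ᵥ perp d) = M (Fin.last d) (Fin.last d) := by
  have h : perp d = Pi.single (Fin.last d) 1 := by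
    ext i; simp [perp, Pi.single_apply]
  simp [h, single_dotProduct]

lemma conjTranspose_cloneV (d : ℕ) : (cloneV d)ᴴ = (cloneV d)ᵀ := by
  ext k p
  simp [cloneV, apply_ite (starRingEnd ℂ)]

lemma conjTranspose_cloneV_mul_kronecker_mul_cloneV (d : ℕ)
    (P : Matrix (Fin (d + 1)) (Fin (d + 1)) ℂ) :
    (cloneV d)ᴴ * (P ⊗ₖ P) * cloneV d =
      P (Fin.last d) (Fin.last d) • P + vecMulVec (P.col (Fin.last d)) (P.row (Fin.last d)) := by
  have hc : (Real.sqrt 2 : ℂ)⁻¹ * (Real.sqrt 2 : ℂ)⁻¹ = 1 / 2 := by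
    rw [← mul_inv, ← Complex.ofReal_mul, Real.mul_self_sqrt zero_le_two]; norm_num
  ext k l
  simp only [conjTranspose_cloneV, mul_apply, transpose_apply, cloneV, Fintype.sum_prod_type,
    kroneckerMap_apply]
  simp only [one_div, Complex.ofReal_inv, mul_ite, mul_one, mul_zero, mul_add, add_mul, ite_mul,
    zero_mul, Finset.sum_add_distrib, Finset.sum_ite_eq', Finset.mem_univ, ↓reduceIte,
    Matrix.add_apply, Matrix.smul_apply, smul_eq_mul, vecMulVec_apply, col_apply, row_apply]
  linear_combination
    (2 * P (Fin.last d) (Fin.last d) * P k l + 2 * P k (Fin.last d) * P (Fin.last d) l) * hc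

theorem trace_kronecker_clone_general (d : ℕ)
    (ρ P : Matrix (Fin (d + 1)) (Fin (d + 1)) ℂ) :
    Matrix.trace ((P ⊗ₖ P) * (cloneV d * ρ * (cloneV d)ᴴ)) =
      (star (perp d) ⬝ᵥ (P *ᵥ perp d)) * Matrix.trace (P * ρ) +
        star (perp d) ⬝ᵥ ((P * ρ * P) *ᵥ perp d) := by
  have cycle : trace ((P ⊗ₖ P) * (cloneV d * ρ * (cloneV d)ᴴ)) =
      trace ((cloneV d)ᴴ * (P ⊗ₖ P) * cloneV d * ρ) := by
    rw [trace_mul_cycle']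
    simp only [Matrix.mul_assoc]
  rw [cycle, conjTranspose_cloneV_mul_kronecker_mul_cloneV, add_mul, trace_add, smul_mul,
    trace_smul, trace_vecMulVec_col_row_mul, star_perp_dotProduct_mulVec_perp,
    star_perp_dotProduct_mulVec_perp, smul_eq_mul]

/-- For `ρ ⪰ 0` with `ρ e_⊥ = 0` and arbitrary `Π`,
`tr((Π ⊗ Π) V ρ V†) = (e_⊥† Π e_⊥)·tr(Π ρ) + e_⊥† Π ρ Π e_⊥`. -/
theorem trace_kronecker_clone (d : ℕ) (hd : 1 ≤ d)
    (ρ P : Matrix (Fin (d + 1)) (Fin (d + 1)) ℂ)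
    (hρ : ρ.PosSemidef) (hρperp : ρ *ᵥ perp d = 0) :
    Matrix.trace ((P ⊗ₖ P) * (cloneV d * ρ * (cloneV d)ᴴ)) =
      (star (perp d) ⬝ᵥ (P *ᵥ perp d)) * Matrix.trace (P * ρ) +
        star (perp d) ⬝ᵥ ((P * ρ * P) *ᵥ perp d) :=
  trace_kronecker_clone_general d ρ P
end

section
/- Let d ≥ 1 and let ρ and σ be positive semidefinite (d+1)×(d+1) complex matrices, each of trace 1, such that ρ·σ = 0, ρ·e_⊥ = 0 and σ·e_⊥ = 0. Then there exists a (d+1)×(d+1) complex matrix Π which is an orthogonal projection (Π† = Π and Π·Π = Π) such that (1/2)·Re tr((Π ⊗ Π) · V ρ V†) + (1/2)·Re tr(((1−Π) ⊗ (1−Π)) · V σ V†) ≥ 1/2 + max(λ_max(ρ), λ_max(σ))/16. (This exhibits a simultaneous binary measurement strategy for two parties, showing that the simultaneous guessing probability of the bit labelling whether VρV† or VσV† was distributed between them is at least 1/2 + max(λ_max(ρ), λ_max(σ))/16.) -/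
open Matrix Kronecker
open scoped ComplexOrder

/-
Let `v` be a unit eigenvector of `ρ` for `λ = λ_max(ρ)`, which is positive as `tr ρ = 1`. Since
`ρ e_⊥ = σ e_⊥ = 0` and `σ ρ = 0`, the vectors `e_⊥`, `v` and the range of `σ` are mutually
orthogonal. For `a² + b² = 1` put `u = b e_⊥ - a v` and let `1 - Π` project onto `range σ ⊕ ℂ u`;
then `Π e_⊥ = a (a e_⊥ + b v)`. Because `tr((A ⊗ A) V ρ V†) = A_⊥⊥ tr(A ρ) + (A ρ A)_⊥⊥`, the
guessing probability is `1/2 + a² (b² - a²) λ / 2`, which is `1/2 + λ/16` for `a = 1/2`. When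
`λ_max(σ)` is the larger eigenvalue, exchange `(ρ, Π)` with `(σ, 1 - Π)`.
-/

theorem isStarProjection_vecMulVec_star {R n : Type*} [CommSemiring R] [StarRing R] [Fintype n]
    {u : n → R} (hu : star u ⬝ᵥ u = 1) : IsStarProjection (vecMulVec u (star u)) where
  isIdempotentElem := by rw [IsIdempotentElem, vecMulVec_mul_vecMulVec, hu, one_smul]
  isSelfAdjoint := by
    rw [IsSelfAdjoint, star_eq_conjTranspose, conjTranspose_vecMulVec, star_star]

theorem trace_vecMulVec_mul {R n : Type*} [CommSemiring R] [Fintype n] (x y : n → R)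
    (M : Matrix n n R) : trace (vecMulVec x y * M) = y ⬝ᵥ M *ᵥ x := by
  rw [vecMulVec_mul, trace_vecMulVec, dotProduct_comm, dotProduct_mulVec]

namespace Matrix.IsHermitian

variable {𝕜 n : Type*} [RCLike 𝕜] [Fintype n]

theorem mul_eq_zero_of_mul_eq_zero {A B : Matrix n n 𝕜} (hA : A.IsHermitian) (hB : B.IsHermitian)
    (h : A * B = 0) : B * A = 0 := by
  rw [← hA.eq, ← hB.eq, ← conjTranspose_mul, h, conjTranspose_zero]

variable [DecidableEq n]

theorem iSup_eigenvalues_pos {A : Matrix n n 𝕜} (hA : A.IsHermitian) (htr : trace A = 1) :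
    0 < ⨆ i, hA.eigenvalues i := by
  have hsum : ∑ i, hA.eigenvalues i = 1 := by
    have h := hA.trace_eq_sum_eigenvalues
    rw [htr, ← RCLike.ofReal_sum] at h
    exact RCLike.ofReal_inj.mp (h.symm.trans RCLike.ofReal_one.symm)
  by_contra! h
  have : ∑ i, hA.eigenvalues i ≤ 0 :=
    Finset.sum_nonpos fun i _ ↦ (le_ciSup (Finite.bddAbove_range _) i).trans h
  linarith

theorem exists_isStarProjection_mul_eq_self {A : Matrix n n 𝕜} (hA : A.IsHermitian) :
    ∃ S : Matrix n n 𝕜, IsStarProjection S ∧ S * A = A ∧ ∀ x, A *ᵥ x = 0 → S *ᵥ x = 0 := by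
  let T := toEuclideanCLM (n := n) (𝕜 := 𝕜) A
  let S := (toEuclideanCLM (n := n) (𝕜 := 𝕜)).symm T.range.starProjection
  have hS (x : n → 𝕜) : S *ᵥ x = T.range.starProjection (WithLp.toLp 2 x) := by
    rw [← ofLp_toEuclideanCLM, StarAlgEquiv.apply_symm_apply]
  refine ⟨S, isStarProjection_starProjection.map
    (toEuclideanCLM (n := n) (𝕜 := 𝕜)).symm.toStarAlgHom, ext_of_mulVec_single fun i ↦ ?_,
    fun x hx ↦ ?_⟩
  · have hmem : T (WithLp.toLp 2 (Pi.single i 1)) ∈ T.range :=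
      LinearMap.mem_range_self (T : EuclideanSpace 𝕜 n →ₗ[𝕜] EuclideanSpace 𝕜 n) _
    rw [← mulVec_mulVec, hS, ← toEuclideanCLM_toLp, Submodule.starProjection_eq_self_iff.mpr hmem]
    rfl
  · have hT : ContinuousLinearMap.adjoint T = T := by
      rw [← ContinuousLinearMap.star_eq_adjoint, ← map_star, hA.star_eq]
    rw [hS, WithLp.ofLp_eq_zero, Submodule.starProjection_apply_eq_zero_iff, T.orthogonal_range,
      hT, LinearMap.mem_ker]
    simp [T, hx]

/-- `Q` is the orthogonal projection onto `range σ ⊕ 𝕜 u`. -/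
theorem exists_isStarProjection_trace_mul_eq {ρ σ : Matrix n n 𝕜} (hσ : σ.IsHermitian)
    (hσρ : σ * ρ = 0) {u : n → 𝕜} (hu : star u ⬝ᵥ u = 1) (hσu : σ *ᵥ u = 0) :
    ∃ Q : Matrix n n 𝕜, IsStarProjection Q ∧ trace (Q * σ) = trace σ ∧
      trace (Q * ρ) = star u ⬝ᵥ ρ *ᵥ u ∧ ∀ x, σ *ᵥ x = 0 → Q *ᵥ x = (star u ⬝ᵥ x) • u := by
  obtain ⟨S, hS, hSσ, hSker⟩ := hσ.exists_isStarProjection_mul_eq_self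
  have hSρ : S * ρ = 0 := ext_of_mulVec_single fun i ↦ by
    rw [← mulVec_mulVec, hSker _ (by rw [mulVec_mulVec, hσρ, zero_mulVec]), zero_mulVec]
  refine ⟨S + vecMulVec u (star u), hS.add (isStarProjection_vecMulVec_star hu) ?_, ?_, ?_,
    fun x hx ↦ ?_⟩
  · rw [mul_vecMulVec, hSker u hσu, zero_vecMulVec]
  · rw [add_mul, trace_add, hSσ, trace_vecMulVec_mul, hσu, dotProduct_zero, add_zero]
  · rw [add_mul, trace_add, hSρ, trace_zero, trace_vecMulVec_mul, zero_add]
  · rw [add_mulVec, hSker x hx, vecMulVec_mulVec, op_smul_eq_smul, zero_add]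

end Matrix.IsHermitian

section Cloning

variable {d : ℕ}

theorem mulVec_perp_apply (M : Matrix (Fin (d + 1)) (Fin (d + 1)) ℂ) (i : Fin (d + 1)) :
    (M *ᵥ perp d) i = M i (Fin.last d) := by
  simp [perp, mulVec, dotProduct]

theorem star_perp : star (perp d) = perp d := by
  ext i
  simp [perp, apply_ite (star : ℂ → ℂ)]

theorem perp_dotProduct (x : Fin (d + 1) → ℂ) : perp d ⬝ᵥ x = x (Fin.last d) := by
  simp [perp, dotProduct]

theorem dotProduct_perp (x : Fin (d + 1) → ℂ) : x ⬝ᵥ perp d = x (Fin.last d) := by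
  rw [dotProduct_comm, perp_dotProduct]

theorem perp_last : perp d (Fin.last d) = 1 := if_pos rfl

theorem apply_last_eq_zero_of_mulVec_eq_smul {ρ : Matrix (Fin (d + 1)) (Fin (d + 1)) ℂ}
    (hρ : ρ.IsHermitian) (hρe : ρ *ᵥ perp d = 0) {v : Fin (d + 1) → ℂ} {l : ℂ} (hl : l ≠ 0)
    (hv : ρ *ᵥ v = l • v) : v (Fin.last d) = 0 := by
  have h : star (perp d) ⬝ᵥ ρ *ᵥ v = star (ρ *ᵥ perp d) ⬝ᵥ v := by
    rw [dotProduct_mulVec, star_mulVec, hρ.eq]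
  rw [hv, hρe, star_zero, zero_dotProduct, dotProduct_smul, star_perp, perp_dotProduct,
    smul_eq_mul] at h
  exact (mul_eq_zero.mp h).resolve_left hl

theorem trace_kronecker_mul_cloneV_conj (A B ρ : Matrix (Fin (d + 1)) (Fin (d + 1)) ℂ) :
    trace ((A ⊗ₖ B) * (cloneV d * ρ * (cloneV d)ᴴ)) =
      (1 / 2 : ℂ) * (A (Fin.last d) (Fin.last d) * trace (B * ρ)
        + B (Fin.last d) (Fin.last d) * trace (A * ρ)
        + (A * ρ * B) (Fin.last d) (Fin.last d) + (B * ρ * A) (Fin.last d) (Fin.last d)) := by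
  have hc : ((1 / Real.sqrt 2 : ℝ) : ℂ) * ((1 / Real.sqrt 2 : ℝ) : ℂ) = 1 / 2 := by
    rw [← Complex.ofReal_mul, div_mul_div_comm, Real.mul_self_sqrt zero_le_two]; norm_num
  simp only [trace, diag_apply, mul_apply, conjTranspose_apply, cloneV, kroneckerMap_apply,
    Fintype.sum_prod_type, star_mul', Complex.star_def, Complex.conj_ofReal, map_add, map_mul,
    apply_ite (starRingEnd ℂ), map_one, map_zero]
  simp only [add_mul, mul_add, mul_ite, ite_mul, mul_zero, zero_mul, mul_one,
    Finset.sum_add_distrib, Finset.sum_ite_irrel, Finset.sum_const_zero, Finset.sum_ite_eq,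
    Finset.sum_ite_eq', Finset.mem_univ, if_true, Finset.mul_sum, Finset.sum_mul]
  simp only [mul_right_comm _ _ ((1 / Real.sqrt 2 : ℝ) : ℂ), hc, ← Finset.sum_add_distrib]
  exact Finset.sum_congr rfl fun _ _ ↦ Finset.sum_congr rfl fun _ _ ↦ by ring

theorem trace_kronecker_self_mul_cloneV_conj (P ρ : Matrix (Fin (d + 1)) (Fin (d + 1)) ℂ) :
    trace ((P ⊗ₖ P) * (cloneV d * ρ * (cloneV d)ᴴ)) =
      (P *ᵥ perp d) (Fin.last d) * trace (P * ρ) + (P *ᵥ ρ *ᵥ P *ᵥ perp d) (Fin.last d) := by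
  rw [trace_kronecker_mul_cloneV_conj, mulVec_mulVec, mulVec_mulVec, mulVec_perp_apply,
    mulVec_perp_apply]
  ring

noncomputable def guessProb (P ρ σ : Matrix (Fin (d + 1)) (Fin (d + 1)) ℂ) : ℝ :=
  (1 / 2) * (trace ((P ⊗ₖ P) * (cloneV d * ρ * (cloneV d)ᴴ))).re +
    (1 / 2) * (trace (((1 - P) ⊗ₖ (1 - P)) * (cloneV d * σ * (cloneV d)ᴴ))).re

theorem guessProb_one_sub (P ρ σ : Matrix (Fin (d + 1)) (Fin (d + 1)) ℂ) :
    guessProb (1 - P) σ ρ = guessProb P ρ σ := by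
  rw [guessProb, guessProb, sub_sub_cancel, add_comm]

theorem exists_guessProb_eq_of_mulVec_eq_smul {ρ σ : Matrix (Fin (d + 1)) (Fin (d + 1)) ℂ}
    (hσ : σ.IsHermitian) (htρ : trace ρ = 1) (htσ : trace σ = 1) (hσρ : σ * ρ = 0)
    (hρe : ρ *ᵥ perp d = 0) (hσe : σ *ᵥ perp d = 0) {v : Fin (d + 1) → ℂ} {l : ℝ}
    (hv : ρ *ᵥ v = (l : ℂ) • v) (hσv : σ *ᵥ v = 0) (hvv : star v ⬝ᵥ v = 1)
    (hvL : v (Fin.last d) = 0) {a b : ℝ} (hab : a ^ 2 + b ^ 2 = 1) :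
    ∃ P, IsStarProjection P ∧ guessProb P ρ σ = 1 / 2 + a ^ 2 * (b ^ 2 - a ^ 2) * l / 2 := by
  have habC : (a : ℂ) ^ 2 + (b : ℂ) ^ 2 = 1 := by exact_mod_cast hab
  set u : Fin (d + 1) → ℂ := (b : ℂ) • perp d - (a : ℂ) • v
  have hsu : star u = (b : ℂ) • perp d - (a : ℂ) • star v := by
    simp only [u, star_sub, star_smul, Complex.star_def, Complex.conj_ofReal, star_perp]
  have hue : star u ⬝ᵥ perp d = b := by simp [hsu, dotProduct_perp, perp_last, hvL]
  have huv : star u ⬝ᵥ v = -a := by simp [hsu, perp_dotProduct, hvL, hvv]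
  have huu : star u ⬝ᵥ u = 1 := by
    simp only [u, dotProduct_sub, dotProduct_smul, hue, huv, smul_eq_mul]
    linear_combination habC
  have huL : u (Fin.last d) = b := by simp [u, hvL, perp_last]
  have hρu : ρ *ᵥ u = (-(a * l) : ℂ) • v := by
    rw [mulVec_sub, mulVec_smul, mulVec_smul, hρe, hv, smul_zero, zero_sub, smul_smul, neg_smul]
  have hσu : σ *ᵥ u = 0 := by
    rw [mulVec_sub, mulVec_smul, mulVec_smul, hσe, hσv, smul_zero, smul_zero, sub_zero]
  obtain ⟨Q, hQ, hQσ, hQρ, hQker⟩ := hσ.exists_isStarProjection_trace_mul_eq hσρ huu hσu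
  have hQe : Q *ᵥ perp d = (b : ℂ) • u := by rw [hQker _ hσe, hue]
  have hρside : trace (((1 - Q) ⊗ₖ (1 - Q)) * (cloneV d * ρ * (cloneV d)ᴴ)) =
      ((a ^ 2 * (1 - a ^ 2 * l) + a ^ 2 * b ^ 2 * l : ℝ) : ℂ) := by
    rw [trace_kronecker_self_mul_cloneV_conj, sub_mul, trace_sub, one_mul, htρ, hQρ, hρu]
    simp only [sub_mulVec, one_mulVec, hQe, hQker _ hσv, mulVec_sub, mulVec_smul, hρe, hρu,
      dotProduct_smul, huv, mulVec_zero, Pi.zero_apply, Pi.sub_apply, Pi.smul_apply, smul_eq_mul,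
      perp_last, hvL, huL]
    push_cast
    linear_combination ((a : ℂ) ^ 2 * l - 1) * habC
  have hσside : trace ((Q ⊗ₖ Q) * (cloneV d * σ * (cloneV d)ᴴ)) = ((b ^ 2 : ℝ) : ℂ) := by
    rw [trace_kronecker_self_mul_cloneV_conj, hQe, hQσ, htσ, mulVec_smul, hσu]
    simp [huL, sq]
  refine ⟨1 - Q, hQ.one_sub, ?_⟩
  rw [guessProb, sub_sub_cancel, hρside, hσside, Complex.ofReal_re, Complex.ofReal_re]
  linear_combination hab / 2

theorem exists_guessProb_eq_iSup_eigenvalues {ρ σ : Matrix (Fin (d + 1)) (Fin (d + 1)) ℂ}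
    (hρ : ρ.IsHermitian) (hσ : σ.IsHermitian) (htρ : trace ρ = 1) (htσ : trace σ = 1)
    (hσρ : σ * ρ = 0) (hρe : ρ *ᵥ perp d = 0) (hσe : σ *ᵥ perp d = 0) :
    ∃ P, IsStarProjection P ∧ guessProb P ρ σ = 1 / 2 + (⨆ i, hρ.eigenvalues i) / 16 := by
  obtain ⟨i, hi⟩ := exists_eq_ciSup_of_finite (f := hρ.eigenvalues)
  set v := ⇑(hρ.eigenvectorBasis i)
  have hl : (hρ.eigenvalues i : ℂ) ≠ 0 :=
    Complex.ofReal_ne_zero.mpr (hi ▸ hρ.iSup_eigenvalues_pos htρ).ne'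
  have hv : ρ *ᵥ v = (hρ.eigenvalues i : ℂ) • v := by
    rw [hρ.mulVec_eigenvectorBasis, Complex.coe_smul]
  have hvv : star v ⬝ᵥ v = 1 := by
    rw [dotProduct_comm, ← EuclideanSpace.inner_eq_star_dotProduct, OrthonormalBasis.inner_eq_one]
  have hσv : σ *ᵥ v = 0 := by
    have h : σ *ᵥ ρ *ᵥ v = 0 := by rw [mulVec_mulVec, hσρ, zero_mulVec]
    rwa [hv, mulVec_smul, smul_eq_zero, or_iff_right hl] at h
  -- `a² = 1/4` maximises the gain `a² (b² - a²) = a² (1 - 2a²)`.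
  obtain ⟨P, hP, hval⟩ := exists_guessProb_eq_of_mulVec_eq_smul hσ htρ htσ hσρ hρe hσe hv hσv hvv
    (apply_last_eq_zero_of_mulVec_eq_smul hρ hρe hl hv) (a := 1 / 2) (b := √3 / 2)
    (by norm_num [div_pow])
  refine ⟨P, hP, hval.trans ?_⟩
  rw [← hi]
  norm_num [div_pow]
  ring

end Cloning

theorem simultaneous_guessing_lower_bound_general (d : ℕ)
    (ρ σ : Matrix (Fin (d + 1)) (Fin (d + 1)) ℂ)
    (hρ : ρ.PosSemidef) (hσ : σ.PosSemidef)
    (htρ : Matrix.trace ρ = 1) (htσ : Matrix.trace σ = 1)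
    (hρσ : ρ * σ = 0)
    (hρperp : ρ *ᵥ perp d = 0) (hσperp : σ *ᵥ perp d = 0) :
    ∃ P : Matrix (Fin (d + 1)) (Fin (d + 1)) ℂ, Pᴴ = P ∧ P * P = P ∧
      (1 / 2) * (Matrix.trace ((P ⊗ₖ P) * (cloneV d * ρ * (cloneV d)ᴴ))).re +
      (1 / 2) * (Matrix.trace (((1 - P) ⊗ₖ (1 - P)) * (cloneV d * σ * (cloneV d)ᴴ))).re ≥
        1 / 2 + max (⨆ i, hρ.1.eigenvalues i) (⨆ i, hσ.1.eigenvalues i) / 16 := by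
  rcases le_total (⨆ i, hσ.1.eigenvalues i) (⨆ i, hρ.1.eigenvalues i) with hle | hle
  · obtain ⟨P, hP, hval⟩ := exists_guessProb_eq_iSup_eigenvalues hρ.1 hσ.1 htρ htσ
      (hρ.1.mul_eq_zero_of_mul_eq_zero hσ.1 hρσ) hρperp hσperp
    refine ⟨P, hP.isSelfAdjoint, hP.isIdempotentElem, ?_⟩
    rw [max_eq_left hle]
    exact hval.ge
  · obtain ⟨P, hP, hval⟩ := exists_guessProb_eq_iSup_eigenvalues hσ.1 hρ.1 htσ htρ hρσ hσperp
      hρperp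
    refine ⟨1 - P, hP.one_sub.isSelfAdjoint, hP.one_sub.isIdempotentElem, ?_⟩
    rw [max_eq_right hle, ← hval, ← guessProb_one_sub]
    exact le_rfl

/-- Lemma 1 of the paper: for orthogonal density matrices `ρ, σ` supported away from `e_⊥`,
there is a projective measurement `{Π, 1−Π}` whose simultaneous guessing probability for
distinguishing `VρV†` from `VσV†` is at least `1/2 + max(λ_max(ρ), λ_max(σ))/16`. -/
theorem simultaneous_guessing_lower_bound (d : ℕ) (hd : 1 ≤ d)
    (ρ σ : Matrix (Fin (d + 1)) (Fin (d + 1)) ℂ)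
    (hρ : ρ.PosSemidef) (hσ : σ.PosSemidef)
    (htρ : Matrix.trace ρ = 1) (htσ : Matrix.trace σ = 1)
    (hρσ : ρ * σ = 0)
    (hρperp : ρ *ᵥ perp d = 0) (hσperp : σ *ᵥ perp d = 0) :
    ∃ P : Matrix (Fin (d + 1)) (Fin (d + 1)) ℂ, Pᴴ = P ∧ P * P = P ∧
      (1 / 2) * (Matrix.trace ((P ⊗ₖ P) * (cloneV d * ρ * (cloneV d)ᴴ))).re +
      (1 / 2) * (Matrix.trace (((1 - P) ⊗ₖ (1 - P)) * (cloneV d * σ * (cloneV d)ᴴ))).re ≥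
        1 / 2 + max (⨆ i, hρ.1.eigenvalues i) (⨆ i, hσ.1.eigenvalues i) / 16 :=
  simultaneous_guessing_lower_bound_general d ρ σ hρ hσ htρ htσ hρσ hρperp hσperp
end

section
/- Let (Ω, 𝒫) be a probability space, let d ≥ 1, M ≥ 1, and let a, b : Fin d → Ω → ℝ be random variables such that the combined family of 2d random variables (a_0,…,a_{d−1},b_0,…,b_{d−1}) is mutually independent and each has the standard Gaussian distribution N(0,1) (i.e., its law is gaussianReal 0 1). Let S : Fin M → Finset (Fin d) be a partition of Fin d into M pairwise disjoint nonempty sets whose union is all of Fin d. Then 𝔼[ max_{m ∈ Fin M} ( Σ_{i ∈ S m} (a_i² + b_i²) ) / ( Σ_{i ∈ Fin d} (a_i² + b_i²) ) ] ≥ ((1/2 − e⁻¹)/2) · ln M / d, where the maximum is over the M values of the ratio, ln is the natural logarithm, and e⁻¹ = exp(−1). -/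
/-!
Write `Z i = a i ^ 2 + b i ^ 2`. As the squared radius of a standard Gaussian vector in the
plane, `Z i` has tail `P (t ≤ Z i) = exp (-t / 2)` (polar coordinates), which equals `1 / M` for
`t = 2 log M`. The blocks are disjoint and nonempty, so their union has at least `M` indices, and
the `Z i` are independent: all of them stay below `t` with probability at most
`(1 - 1 / M) ^ M ≤ exp (-1)`. Since `E (Z i) = 2`, Markov's inequality gives `∑ Z i < 4 d` with
probability at least `1 / 2`. Outside these two bad events some block carries mass at least `t`
out of a total below `4 d`, so the maximal ratio is at least `t / (4 d)` with probability at least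
`1 / 2 - exp (-1)`.
-/

open MeasureTheory ProbabilityTheory Real Set Function
open scoped ENNReal NNReal

noncomputable def maxBlockRatio {ι : Type*} [Fintype ι] {M : ℕ} (S : Fin M → Finset ι)
    (z : ι → ℝ) : ℝ :=
  ⨆ m, (∑ i ∈ S m, z i) / ∑ i, z i

section maxBlockRatio

variable {ι : Type*} [Fintype ι] {M : ℕ} (S : Fin M → Finset ι) {z : ι → ℝ}

lemma maxBlockRatio_nonneg (hz : 0 ≤ z) : 0 ≤ maxBlockRatio S z :=
  Real.iSup_nonneg fun _ =>
    div_nonneg (Finset.sum_nonneg fun i _ => hz i) (Finset.sum_nonneg fun i _ => hz i)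

lemma maxBlockRatio_le_one (hz : 0 ≤ z) : maxBlockRatio S z ≤ 1 := by
  refine Real.iSup_le (fun m => div_le_one_of_le₀ ?_ (Finset.sum_nonneg fun i _ => hz i))
    zero_le_one
  exact Finset.sum_le_sum_of_subset_of_nonneg (Finset.subset_univ _) fun i _ _ => hz i

lemma div_le_maxBlockRatio (hz : 0 ≤ z) {t s : ℝ} (ht : 0 < t) (hs : ∑ i, z i ≤ s)
    {m : Fin M} {i : ι} (him : i ∈ S m) (hti : t ≤ z i) : t / s ≤ maxBlockRatio S z := by
  have hblock : t ≤ ∑ j ∈ S m, z j := hti.trans (Finset.single_le_sum (fun j _ => hz j) him)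
  have htotal : t ≤ ∑ j, z j :=
    hti.trans (Finset.single_le_sum (fun j _ => hz j) (Finset.mem_univ i))
  calc t / s ≤ (∑ j ∈ S m, z j) / ∑ j, z j :=
        div_le_div₀ (ht.le.trans hblock) hblock (ht.trans_le htotal) hs
    _ ≤ maxBlockRatio S z :=
        le_ciSup (f := fun m => (∑ j ∈ S m, z j) / ∑ j, z j) (Set.finite_range _).bddAbove m

lemma measurable_maxBlockRatio : Measurable (maxBlockRatio S) := by
  unfold maxBlockRatio
  fun_prop

end maxBlockRatio

section ProductMeasure

variable {ι α : Type*} [Fintype ι] [MeasurableSpace α] {ν : Measure α} [IsProbabilityMeasure ν]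

lemma measureReal_pi_forall_mem (R : Finset ι) {B : Set α} (hB : MeasurableSet B) :
    (Measure.pi fun _ : ι => ν).real {x | ∀ i ∈ R, x i ∈ B} = ν.real B ^ R.card := by
  have hindep : iIndepFun (fun i (x : ι → α) => x i) (Measure.pi fun _ => ν) :=
    iIndepFun_pi (X := fun _ => id) fun _ => aemeasurable_id
  have hset : {x : ι → α | ∀ i ∈ R, x i ∈ B} = ⋂ i ∈ R, (fun x : ι → α => x i) ⁻¹' B := by
    ext x; simp
  rw [measureReal_def, hset, hindep.measure_inter_preimage_eq_mul R fun _ _ => hB,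
    ENNReal.toReal_prod, ← Finset.prod_const, measureReal_def]
  exact Finset.prod_congr rfl fun i _ => by
    rw [(measurePreserving_eval _ i).measure_preimage hB.nullMeasurableSet]

lemma mul_measureReal_le_card_mul_integral {q : α → ℝ} (hq0 : 0 ≤ q) (hqi : Integrable q ν)
    (s : ℝ) : s * (Measure.pi fun _ : ι => ν).real {x | s ≤ ∑ i, q (x i)} ≤
      Fintype.card ι * ∫ y, q y ∂ν := by
  have hint : ∀ i, Integrable (fun x : ι → α => q (x i)) (Measure.pi fun _ => ν) :=
    fun i => integrable_comp_eval hqi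
  calc _ ≤ ∫ x, ∑ i, q (x i) ∂(Measure.pi fun _ => ν) :=
        mul_meas_ge_le_integral_of_nonneg (.of_forall fun x => Finset.sum_nonneg fun i _ => hq0 _)
          (integrable_finsetSum _ fun i _ => hint i) s
    _ = Fintype.card ι * ∫ y, q y ∂ν := by
        rw [integral_finsetSum _ fun i _ => hint i, Finset.sum_congr rfl fun i _ =>
          integral_comp_eval (μ := fun _ : ι => ν) (i := i) hqi.aestronglyMeasurable]
        simp

theorem le_integral_maxBlockRatio_pi {M : ℕ} (S : Fin M → Finset ι)
    (hdisj : Pairwise (Disjoint on S)) (hne : ∀ m, (S m).Nonempty) {q : α → ℝ}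
    (hqm : Measurable q) (hq0 : 0 ≤ q) (hqi : Integrable q ν) {t s : ℝ} (ht : 0 < t) (hs : 0 < s) :
    t / s * (1 - Fintype.card ι * (∫ y, q y ∂ν) / s - ν.real {y | q y < t} ^ M) ≤
      ∫ x, maxBlockRatio S (fun i => q (x i)) ∂(Measure.pi fun _ => ν) := by
  classical
  set μ := Measure.pi fun _ : ι => ν
  set R := Finset.univ.biUnion S
  have hcover : Set.univ ⊆ {x : ι → α | t / s ≤ maxBlockRatio S (fun i => q (x i))} ∪
      {x | s ≤ ∑ i, q (x i)} ∪ {x | ∀ i ∈ R, q (x i) < t} := by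
    intro x _
    by_cases hmiss : ∀ i ∈ R, q (x i) < t
    · exact Or.inr hmiss
    by_cases hlarge : s ≤ ∑ i, q (x i)
    · exact Or.inl (Or.inr hlarge)
    push Not at hmiss hlarge
    obtain ⟨i, hiR, hti⟩ := hmiss
    obtain ⟨m, -, him⟩ := Finset.mem_biUnion.mp hiR
    exact Or.inl (Or.inl (div_le_maxBlockRatio S (fun i => hq0 _) ht hlarge.le him hti))
  have hmiss : μ.real {x | ∀ i ∈ R, q (x i) < t} ≤ ν.real {y | q y < t} ^ M := by
    refine (measureReal_pi_forall_mem R (measurableSet_lt hqm measurable_const)).le.trans ?_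
    refine pow_le_pow_of_le_one measureReal_nonneg measureReal_le_one ?_
    simpa using Finset.card_le_card_biUnion (s := Finset.univ) (fun m _ m' _ h => hdisj h)
      fun m _ => hne m
  have hmarkov : μ.real {x | s ≤ ∑ i, q (x i)} ≤ Fintype.card ι * (∫ y, q y ∂ν) / s := by
    rw [le_div_iff₀ hs, mul_comm]
    exact mul_measureReal_le_card_mul_integral hq0 hqi s
  have hgood : 1 - Fintype.card ι * (∫ y, q y ∂ν) / s - ν.real {y | q y < t} ^ M ≤
      μ.real {x | t / s ≤ maxBlockRatio S (fun i => q (x i))} := by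
    have := (measureReal_mono (μ := μ) hcover).trans
      ((measureReal_union_le _ _).trans (add_le_add_left (measureReal_union_le _ _) _))
    rw [probReal_univ] at this
    linarith
  have hF : Integrable (fun x => maxBlockRatio S (fun i => q (x i))) μ := by
    refine .of_bound ((measurable_maxBlockRatio S).comp (by fun_prop)).aestronglyMeasurable 1
      (.of_forall fun x => ?_)
    rw [Real.norm_of_nonneg (maxBlockRatio_nonneg S fun i => hq0 _)]
    exact maxBlockRatio_le_one S fun i => hq0 _
  calc _ ≤ t / s * μ.real {x | t / s ≤ maxBlockRatio S (fun i => q (x i))} := by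
        gcongr
    _ ≤ _ := mul_meas_ge_le_integral_of_nonneg
        (.of_forall fun x => maxBlockRatio_nonneg S fun i => hq0 _) hF _

end ProductMeasure

lemma integral_mul_exp_neg_sq_div_two (x : ℝ) :
    ∫ r in (0)..x, r * exp (-r ^ 2 / 2) = 1 - exp (-x ^ 2 / 2) := by
  rw [intervalIntegral.integral_eq_sub_of_hasDerivAt (f := fun r => -exp (-r ^ 2 / 2))
    (fun r _ => ?_) ((by fun_prop : Continuous _).intervalIntegrable _ _)]
  · simp only [ne_eq, OfNat.ofNat_ne_zero, not_false_eq_true, zero_pow, neg_zero, zero_div,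
      exp_zero]
    ring
  · have h : HasDerivAt (fun r : ℝ => -r ^ 2 / 2) (-r) r :=
      ((hasDerivAt_pow 2 r).neg.div_const 2).congr_deriv (by ring)
    exact h.exp.neg.congr_deriv (by ring)

lemma lintegral_comp_sq_add_sq {f : ℝ → ℝ≥0∞} (hf : Measurable f) :
    ∫⁻ p : ℝ × ℝ, f (p.1 ^ 2 + p.2 ^ 2) =
      ENNReal.ofReal (2 * π) * ∫⁻ r in Ioi 0, ENNReal.ofReal r * f (r ^ 2) := by
  have hpolar : ∀ p : ℝ × ℝ, (polarCoord.symm p).1 ^ 2 + (polarCoord.symm p).2 ^ 2 = p.1 ^ 2 := by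
    rintro ⟨r, θ⟩
    simp only [polarCoord_symm_apply]
    linear_combination r ^ 2 * cos_sq_add_sin_sq θ
  rw [← lintegral_comp_polarCoord_symm]
  simp only [hpolar, smul_eq_mul]
  rw [show polarCoord.target = Ioi 0 ×ˢ Ioo (-π) π from rfl, Measure.volume_eq_prod,
    ← Measure.prod_restrict, lintegral_prod _ (by fun_prop)]
  simp only [lintegral_const, Measure.restrict_apply_univ, Real.volume_Ioo]
  rw [lintegral_mul_const _ (by fun_prop), mul_comm]
  ring_nf

lemma gaussianReal_prod_eq_withDensity :
    (gaussianReal 0 1).prod (gaussianReal 0 1) = volume.withDensity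
      fun p : ℝ × ℝ => ENNReal.ofReal ((2 * π)⁻¹ * exp (-(p.1 ^ 2 + p.2 ^ 2) / 2)) := by
  rw [gaussianReal_of_var_ne_zero 0 one_ne_zero, prod_withDensity (measurable_gaussianPDF 0 1)
    (measurable_gaussianPDF 0 1), ← Measure.volume_eq_prod]
  congr 1
  funext p
  rw [gaussianPDF, gaussianPDF, ← ENNReal.ofReal_mul (gaussianPDFReal_nonneg 0 1 _)]
  congr 1
  simp only [gaussianPDFReal, NNReal.coe_one, mul_one, sub_zero]
  rw [mul_mul_mul_comm, ← mul_inv, mul_self_sqrt (by positivity), ← exp_add]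
  ring_nf

lemma gaussianReal_prod_real_sq_add_sq_lt {t : ℝ} (ht : 0 ≤ t) :
    ((gaussianReal 0 1).prod (gaussianReal 0 1)).real {p | p.1 ^ 2 + p.2 ^ 2 < t} =
      1 - exp (-t / 2) := by
  set g : ℝ → ℝ≥0∞ := (Iio t).indicator fun u => ENNReal.ofReal ((2 * π)⁻¹ * exp (-u / 2))
  have hg : Measurable g := (Measurable.ennreal_ofReal (by fun_prop)).indicator measurableSet_Iio
  have hradial : ∀ r ∈ Ioi (0 : ℝ), ENNReal.ofReal r * g (r ^ 2) =
      (Iio (√t)).indicator (fun r => ENNReal.ofReal ((2 * π)⁻¹ * (r * exp (-r ^ 2 / 2)))) r := by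
    intro r hr
    by_cases hrt : r < √t
    · have : r ^ 2 < t := (lt_sqrt hr.out.le).mp hrt
      simp only [g, indicator_of_mem (show r ^ 2 ∈ Iio t from this),
        indicator_of_mem (show r ∈ Iio √t from hrt), ← ENNReal.ofReal_mul hr.out.le]
      ring_nf
    · have : ¬ r ^ 2 < t := fun h => hrt ((lt_sqrt hr.out.le).mpr h)
      simp [g, this, hrt]
  have hint : IntegrableOn (fun r => (2 * π)⁻¹ * (r * exp (-r ^ 2 / 2))) (Ioo 0 √t) :=
    (Continuous.integrableOn_Icc (by fun_prop)).mono_set Ioo_subset_Icc_self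
  have hnonneg : ∀ r ∈ Ioo 0 √t, 0 ≤ (2 * π)⁻¹ * (r * exp (-r ^ 2 / 2)) := fun r hr => by
    have := hr.1
    positivity
  rw [measureReal_def, gaussianReal_prod_eq_withDensity,
    withDensity_apply _ (measurableSet_lt (by fun_prop) measurable_const),
    ← lintegral_indicator (measurableSet_lt (by fun_prop) measurable_const)]
  change (∫⁻ p : ℝ × ℝ, g (p.1 ^ 2 + p.2 ^ 2)).toReal = _
  rw [lintegral_comp_sq_add_sq hg, setLIntegral_congr_fun measurableSet_Ioi hradial,
    lintegral_indicator measurableSet_Iio, Measure.restrict_restrict measurableSet_Iio,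
    Iio_inter_Ioi, ← ofReal_integral_eq_lintegral_ofReal hint
      (ae_restrict_of_forall_mem measurableSet_Ioo hnonneg), ENNReal.toReal_mul,
    ENNReal.toReal_ofReal (by positivity),
    ENNReal.toReal_ofReal (setIntegral_nonneg measurableSet_Ioo hnonneg), integral_const_mul,
    ← integral_Ioc_eq_integral_Ioo, ← intervalIntegral.integral_of_le (sqrt_nonneg t),
    integral_mul_exp_neg_sq_div_two, sq_sqrt ht]
  field_simp

lemma integral_sq_gaussianReal (v : ℝ≥0) : ∫ x, x ^ 2 ∂gaussianReal 0 v = v := by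
  have := variance_fun_id_gaussianReal (μ := 0) (v := v)
  rw [variance_eq_integral measurable_id'.aemeasurable, integral_id_gaussianReal] at this
  simpa using this

lemma integrable_sq_gaussianReal (μ : ℝ) (v : ℝ≥0) :
    Integrable (fun x => x ^ 2) (gaussianReal μ v) :=
  (memLp_id_gaussianReal 2).integrable_sq

lemma integrable_sq_add_sq_gaussianReal_prod (v : ℝ≥0) :
    Integrable (fun p : ℝ × ℝ => p.1 ^ 2 + p.2 ^ 2) ((gaussianReal 0 v).prod (gaussianReal 0 v)) :=
  ((integrable_sq_gaussianReal 0 v).comp_fst _).add ((integrable_sq_gaussianReal 0 v).comp_snd _)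

lemma integral_sq_add_sq_gaussianReal_prod (v : ℝ≥0) :
    ∫ p : ℝ × ℝ, p.1 ^ 2 + p.2 ^ 2 ∂(gaussianReal 0 v).prod (gaussianReal 0 v) = 2 * v := by
  rw [integral_add ((integrable_sq_gaussianReal 0 v).comp_fst _)
      ((integrable_sq_gaussianReal 0 v).comp_snd _), integral_fun_fst (fun x => x ^ 2),
    integral_fun_snd (fun x => x ^ 2), integral_sq_gaussianReal]
  simp only [probReal_univ, one_smul]
  ring

lemma ProbabilityTheory.iIndepFun.hasLaw_pi_prod {Ω ι β : Type*} [MeasurableSpace Ω] [Fintype ι]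
    [MeasurableSpace β] {P : Measure Ω} {ν : Measure β} [IsProbabilityMeasure ν] {a b : ι → Ω → β}
    (hindep : iIndepFun (Sum.elim a b) P) (hlaw : ∀ j, P.map (Sum.elim a b j) = ν) :
    HasLaw (fun ω i => (a i ω, b i ω)) (Measure.pi fun _ => ν.prod ν) P := by
  have hlaw' : ∀ j, HasLaw (Sum.elim a b j) ν P := fun j =>
    ⟨.of_map_ne_zero (by rw [hlaw j]; exact IsProbabilityMeasure.ne_zero ν), hlaw j⟩
  have hpair : MeasurePreserving
      ((MeasurableEquiv.arrowProdEquivProdArrow β β ι).symm ∘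
        MeasurableEquiv.sumPiEquivProdPi fun _ : ι ⊕ ι => β)
      (Measure.pi fun _ => ν) (Measure.pi fun _ => ν.prod ν) :=
    (measurePreserving_arrowProdEquivProdArrow β β ι _ _).symm.comp
      (measurePreserving_sumPiEquivProdPi _)
  exact hpair.comp_hasLaw (hindep.hasLaw_pi hlaw')

theorem expected_max_block_ratio_gaussian_general
    {Ω : Type} [MeasurableSpace Ω] (Pr : Measure Ω) [IsProbabilityMeasure Pr]
    (d M : ℕ)
    (a b : Fin d → Ω → ℝ)
    (hindep : iIndepFun
      (Sum.elim a b) Pr)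
    (hlaw : ∀ i : Fin d ⊕ Fin d, Measure.map (Sum.elim a b i) Pr = gaussianReal 0 1)
    (S : Fin M → Finset (Fin d))
    (hdisj : ∀ m m' : Fin M, m ≠ m' → Disjoint (S m) (S m'))
    (hne : ∀ m, (S m).Nonempty) :
    (∫ ω, (⨆ m : Fin M,
        (∑ i ∈ S m, ((a i ω) ^ 2 + (b i ω) ^ 2)) /
          (∑ i : Fin d, ((a i ω) ^ 2 + (b i ω) ^ 2))) ∂Pr) ≥
      ((1 / 2 - Real.exp (-1)) / 2) * Real.log M / (d : ℝ) := by
  rcases le_or_gt M 1 with hM | hM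
  · have hlog : Real.log M = 0 := by interval_cases M <;> simp
    rw [hlog, mul_zero, zero_div, ge_iff_le]
    exact integral_nonneg fun ω => maxBlockRatio_nonneg S fun i => by positivity
  have hd : 0 < d := Fin.pos (hne ⟨0, by omega⟩).choose
  have hlogM : 0 < Real.log M := Real.log_pos (by exact_mod_cast hM)
  have hmiss : ((gaussianReal 0 1).prod (gaussianReal 0 1)).real
      {p | p.1 ^ 2 + p.2 ^ 2 < 2 * Real.log M} = 1 - 1 / M := by
    rw [gaussianReal_prod_real_sq_add_sq_lt (by positivity),
      show -(2 * Real.log M) / 2 = -Real.log M by ring, exp_neg, exp_log (by positivity), one_div]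
  have hpow : (1 - 1 / (M : ℝ)) ^ M ≤ exp (-1) :=
    one_sub_div_pow_le_exp_neg (by exact_mod_cast hM.le)
  have key := le_integral_maxBlockRatio_pi S hdisj hne
    (by fun_prop) (fun p => by positivity) (integrable_sq_add_sq_gaussianReal_prod 1)
    (t := 2 * Real.log M) (s := 4 * d) (by positivity) (by positivity)
  rw [integral_sq_add_sq_gaussianReal_prod, NNReal.coe_one, mul_one, hmiss, Fintype.card_fin]
    at key
  have hhalf : (d : ℝ) * 2 / (4 * d) = 1 / 2 := by field_simp; norm_num
  calc ((1 / 2 - exp (-1)) / 2) * Real.log M / d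
      = 2 * Real.log M / (4 * d) * (1 / 2 - exp (-1)) := by field_simp; ring
    _ ≤ 2 * Real.log M / (4 * d) * (1 - d * 2 / (4 * d) - (1 - 1 / M) ^ M) := by
        gcongr
        linarith
    _ ≤ _ := key
    _ = _ := ((hindep.hasLaw_pi_prod hlaw).integral_comp
        ((measurable_maxBlockRatio S).comp (by fun_prop)).aestronglyMeasurable).symm

/-- The key probabilistic estimate behind Theorem 3 of the paper: for `2d` i.i.d. standard
Gaussians `a_0,…,a_{d−1},b_0,…,b_{d−1}` and a partition `S` of `Fin d` into `M` nonempty blocks,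
`𝔼[ max_m (Σ_{i ∈ S m} (a_i² + b_i²)) / (Σ_i (a_i² + b_i²)) ] ≥ ((1/2 − e⁻¹)/2)·ln M / d`. -/
theorem expected_max_block_ratio_gaussian
    {Ω : Type} [MeasurableSpace Ω] (Pr : Measure Ω) [IsProbabilityMeasure Pr]
    (d M : ℕ) (hd : 1 ≤ d) (hM : 1 ≤ M)
    (a b : Fin d → Ω → ℝ)
    (hindep : iIndepFun
      (Sum.elim a b) Pr)
    (hlaw : ∀ i : Fin d ⊕ Fin d, Measure.map (Sum.elim a b i) Pr = gaussianReal 0 1)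
    (S : Fin M → Finset (Fin d))
    (hdisj : ∀ m m' : Fin M, m ≠ m' → Disjoint (S m) (S m'))
    (hne : ∀ m, (S m).Nonempty)
    (hcover : Finset.univ.biUnion S = (Finset.univ : Finset (Fin d))) :
    (∫ ω, (⨆ m : Fin M,
        (∑ i ∈ S m, ((a i ω) ^ 2 + (b i ω) ^ 2)) /
          (∑ i : Fin d, ((a i ω) ^ 2 + (b i ω) ^ 2))) ∂Pr) ≥
      ((1 / 2 - Real.exp (-1)) / 2) * Real.log M / (d : ℝ) :=
  expected_max_block_ratio_gaussian_general Pr d M a b hindep hlaw S hdisj hne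
end

section
/- Let (Ω, 𝒫) be a probability space, n ≥ 1, λ > 0, and let k : Fin n → ℕ with k i ≥ 1 for all i. Let X : Fin n → Ω → ℝ be mutually independent random variables such that X i has the Gamma distribution with shape k i and rate λ (i.e., the law of X i is gammaMeasure (k i) λ, the Erlang(k i, λ) distribution). Then 𝔼[ (max_{i ∈ Fin n} X_i) / (Σ_{i ∈ Fin n} X_i) ] ≥ ((1/2 − e⁻¹)/2) · ln n / (Σ_{i ∈ Fin n} k i), where ln is the natural logarithm and e⁻¹ = exp(−1). (Note (1/2 − e⁻¹)/2 > 0.0457/log₂ e, so the right-hand side is at least 0.0457·log₂ n / Σ_i k i.) -/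
open MeasureTheory ProbabilityTheory Real Set

/-!
Write `M = max_i X_i`, `S = ∑_i X_i` and `K = ∑_i k_i`. Since `k_i ≥ 1`, translating the Gamma
density by `t ≥ 0` shrinks it by at most the factor `exp (-λ t)`, so `P(X_i < log n / λ) ≤ 1 - 1/n`
and, by independence, `P(M < log n / λ) ≤ (1 - 1/n)^n ≤ e⁻¹`. As `𝔼 S = K / λ`, Markov's inequality
gives `P(S ≥ 2K / λ) ≤ 1/2`. Off these two events `M / S ≥ log n / (2K)`, and `0 ≤ M / S` always,
whence `𝔼[M / S] ≥ (1/2 - e⁻¹) log n / (2K)`.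
-/

namespace MeasureTheory

variable {Ω : Type*} [MeasurableSpace Ω] {μ : Measure Ω} [IsProbabilityMeasure μ]

theorem mul_one_sub_measureReal_le_integral_div {M S : Ω → ℝ} (hM : AEMeasurable M μ)
    (hS : AEMeasurable S μ) (hMS : ∀ᵐ ω ∂μ, 0 ≤ M ω ∧ M ω ≤ S ω) {a b : ℝ} (ha : 0 ≤ a)
    (hb : 0 ≤ b) :
    a / b * (1 - μ.real {ω | M ω < a} - μ.real {ω | b ≤ S ω}) ≤ ∫ ω, M ω / S ω ∂μ := by
  have hratio : ∀ᵐ ω ∂μ, 0 ≤ M ω / S ω ∧ M ω / S ω ≤ 1 := by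
    filter_upwards [hMS] with ω ⟨h0, hle⟩
    exact ⟨div_nonneg h0 (h0.trans hle), div_le_one_of_le₀ hle (h0.trans hle)⟩
  have hint : Integrable (fun ω ↦ M ω / S ω) μ := by
    refine (integrable_const 1).mono' (hM.div hS).aestronglyMeasurable ?_
    filter_upwards [hratio] with ω h
    rw [norm_of_nonneg h.1]
    exact h.2
  set G : Set Ω := {ω | a / b ≤ M ω / S ω}
  set L : Set Ω := {ω | M ω < a}
  set H : Set Ω := {ω | b ≤ S ω}
  have hcover : (univ : Set Ω) ≤ᵐ[μ] (G ∪ L ∪ H : Set Ω) := by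
    filter_upwards [hMS] with ω ⟨h0, hle⟩ _
    show ω ∈ G ∪ L ∪ H
    by_contra hbad
    simp only [G, L, H, mem_union, mem_ofPred_eq, not_or, not_le, not_lt] at hbad
    obtain ⟨⟨hlt, haM⟩, hSb⟩ := hbad
    rcases (h0.trans hle).eq_or_lt with hS0 | hSpos
    · rw [← hS0, div_zero] at hlt
      have : a = 0 := by linarith
      simp [this] at hlt
    · exact hlt.not_ge (div_le_div₀ h0 haM hSpos hSb.le)
  have hgood : 1 - μ.real L - μ.real H ≤ μ.real G := by
    have h := ENNReal.toReal_mono (measure_ne_top _ _) (measure_mono_ae hcover)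
    rw [measure_univ, ENNReal.toReal_one, ← measureReal_def] at h
    linarith [measureReal_union_le (μ := μ) (G ∪ L) H, measureReal_union_le (μ := μ) G L]
  calc a / b * (1 - μ.real L - μ.real H)
      ≤ a / b * μ.real G := by gcongr
    _ ≤ ∫ ω, M ω / S ω ∂μ := mul_meas_ge_le_integral_of_nonneg (hratio.mono fun _ h ↦ h.1) hint _

end MeasureTheory

namespace ProbabilityTheory

variable {Ω ι : Type*} [MeasurableSpace Ω] {μ : Measure Ω}

lemma iIndepFun.measureReal_iSup_lt [Fintype ι] [Nonempty ι] {X : ι → Ω → ℝ}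
    (hindep : iIndepFun X μ) (t : ℝ) :
    μ.real {ω | ⨆ i, X i ω < t} = ∏ i, μ.real (X i ⁻¹' Iio t) := by
  have hset : {ω | ⨆ i, X i ω < t} = ⋂ i ∈ Finset.univ, X i ⁻¹' Iio t := by
    ext ω
    obtain ⟨j, hj⟩ := exists_eq_ciSup_of_finite (f := fun i ↦ X i ω)
    simp only [mem_ofPred_eq, Finset.mem_univ, iInter_true, mem_iInter, mem_preimage, mem_Iio]
    exact ⟨fun h i ↦ (le_ciSup (Finite.bddAbove_range _) i).trans_lt h, fun h ↦ hj ▸ h j⟩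
  rw [hset, measureReal_def, hindep.measure_inter_preimage_eq_mul _ fun _ _ ↦ measurableSet_Iio,
    ENNReal.toReal_prod]
  rfl

section Gamma

variable {a r : ℝ}

lemma gammaMeasure_Iio_zero (a r : ℝ) : gammaMeasure a r (Iio 0) = 0 := by
  rw [gammaMeasure, withDensity_apply _ measurableSet_Iio, lintegral_gammaPDF_of_nonpos le_rfl]

lemma ae_nonneg_gammaMeasure (a r : ℝ) : ∀ᵐ x ∂gammaMeasure a r, 0 ≤ x := by
  simp only [ae_iff, not_le]
  exact gammaMeasure_Iio_zero a r

lemma measurable_gammaPDF (a r : ℝ) : Measurable (gammaPDF a r) :=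
  (measurable_gammaPDFReal a r).ennreal_ofReal

lemma gammaPDFReal_mul_self (ha : 0 < a) (hr : 0 < r) (x : ℝ) :
    gammaPDFReal a r x * x = a / r * gammaPDFReal (a + 1) r x := by
  unfold gammaPDFReal
  split_ifs with hx
  · rw [add_sub_cancel_right, Gamma_add_one ha.ne', rpow_add_one hr.ne']
    rcases hx.eq_or_lt with rfl | hx
    · simp [zero_rpow ha.ne']
    · rw [rpow_sub_one hx.ne']
      field_simp
  · simp

lemma lintegral_ofReal_gammaMeasure (ha : 0 < a) (hr : 0 < r) :
    ∫⁻ x, ENNReal.ofReal x ∂gammaMeasure a r = ENNReal.ofReal (a / r) := by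
  have hdensity (x : ℝ) :
      gammaPDF a r x * ENNReal.ofReal x = ENNReal.ofReal (a / r) * gammaPDF (a + 1) r x := by
    rcases lt_or_ge x 0 with hx | hx
    · simp [gammaPDF_of_neg hx]
    · rw [gammaPDF, gammaPDF, ← ENNReal.ofReal_mul (gammaPDFReal_nonneg ha hr x),
        ← ENNReal.ofReal_mul (by positivity), gammaPDFReal_mul_self ha hr]
  rw [gammaMeasure, lintegral_withDensity_eq_lintegral_mul _ (measurable_gammaPDF a r)
    ENNReal.measurable_ofReal]
  simp_rw [Pi.mul_apply, hdensity]
  rw [lintegral_const_mul _ (measurable_gammaPDF _ r),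
    lintegral_gammaPDF_eq_one (by linarith) hr, mul_one]

lemma integrable_id_gammaMeasure (ha : 0 < a) (hr : 0 < r) : Integrable id (gammaMeasure a r) :=
  ⟨aestronglyMeasurable_id, (hasFiniteIntegral_iff_ofReal (ae_nonneg_gammaMeasure a r)).2 <| by
    simp [lintegral_ofReal_gammaMeasure ha hr]⟩

lemma integral_id_gammaMeasure (ha : 0 < a) (hr : 0 < r) : ∫ x, x ∂gammaMeasure a r = a / r := by
  rw [integral_eq_lintegral_of_nonneg_ae (ae_nonneg_gammaMeasure a r) aestronglyMeasurable_id,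
    lintegral_ofReal_gammaMeasure ha hr, ENNReal.toReal_ofReal (by positivity)]

lemma exp_neg_mul_gammaPDFReal_le (ha : 1 ≤ a) (hr : 0 < r) {t x : ℝ} (ht : 0 ≤ t) (hx : 0 ≤ x) :
    exp (-(r * t)) * gammaPDFReal a r x ≤ gammaPDFReal a r (x + t) := by
  have hGamma : 0 < Gamma a := Gamma_pos_of_pos (by linarith)
  simp only [gammaPDFReal, if_pos hx, if_pos (add_nonneg hx ht)]
  calc exp (-(r * t)) * (r ^ a / Gamma a * x ^ (a - 1) * exp (-(r * x)))
      = r ^ a / Gamma a * x ^ (a - 1) * exp (-(r * (x + t))) := by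
        rw [mul_add, neg_add, exp_add]; ring
    _ ≤ r ^ a / Gamma a * (x + t) ^ (a - 1) * exp (-(r * (x + t))) := by
        gcongr
        linarith

lemma ofReal_exp_neg_mul_le_gammaMeasure_Ici (ha : 1 ≤ a) (hr : 0 < r) {t : ℝ} (ht : 0 ≤ t) :
    ENNReal.ofReal (exp (-(r * t))) ≤ gammaMeasure a r (Ici t) := by
  rw [gammaMeasure, withDensity_apply _ measurableSet_Ici, ← lintegral_indicator measurableSet_Ici,
    ← lintegral_add_right_eq_self _ t]
  calc ENNReal.ofReal (exp (-(r * t)))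
      = ∫⁻ x, ENNReal.ofReal (exp (-(r * t))) * gammaPDF a r x := by
        rw [lintegral_const_mul _ (measurable_gammaPDF a r),
          lintegral_gammaPDF_eq_one (by linarith) hr, mul_one]
    _ ≤ ∫⁻ x, (Ici t).indicator (gammaPDF a r) (x + t) := by
        refine lintegral_mono fun x ↦ ?_
        rcases lt_or_ge x 0 with hx | hx
        · simp [gammaPDF_of_neg hx]
        · rw [indicator_of_mem (by simpa using hx), gammaPDF, gammaPDF,
            ← ENNReal.ofReal_mul (exp_pos _).le]
          exact ENNReal.ofReal_le_ofReal (exp_neg_mul_gammaPDFReal_le ha hr ht hx)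

lemma measureReal_gammaMeasure_Iio_le (ha : 1 ≤ a) (hr : 0 < r) {t : ℝ} (ht : 0 ≤ t) :
    (gammaMeasure a r).real (Iio t) ≤ 1 - exp (-(r * t)) := by
  have := isProbabilityMeasure_gammaMeasure (by linarith : 0 < a) hr
  have htail := ENNReal.toReal_mono (measure_ne_top _ _)
    (ofReal_exp_neg_mul_le_gammaMeasure_Ici ha hr ht)
  rw [ENNReal.toReal_ofReal (exp_pos _).le] at htail
  rw [← compl_Ici, probReal_compl_eq_one_sub measurableSet_Ici, measureReal_def]
  linarith

end Gamma

variable [Fintype ι] [Nonempty ι]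

lemma HasLaw.ae_nonneg_of_gammaMeasure {X : Ω → ℝ} {a r : ℝ}
    (hX : HasLaw X (gammaMeasure a r) μ) : ∀ᵐ ω ∂μ, 0 ≤ X ω :=
  ae_of_ae_map hX.aemeasurable (hX.map_eq ▸ ae_nonneg_gammaMeasure a r)

lemma measureReal_iSup_lt_log_card_div_le {a : ι → ℝ} {r : ℝ} (ha : ∀ i, 1 ≤ a i) (hr : 0 < r)
    {X : ι → Ω → ℝ} (hindep : iIndepFun X μ) (hX : ∀ i, HasLaw (X i) (gammaMeasure (a i) r) μ) :
    μ.real {ω | ⨆ i, X i ω < log (Fintype.card ι) / r} ≤ exp (-1) := by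
  set n := Fintype.card ι
  have hn : (1 : ℝ) ≤ n := by exact_mod_cast Fintype.card_pos
  have htail (i : ι) : μ.real (X i ⁻¹' Iio (log n / r)) ≤ 1 - 1 / n :=
    calc μ.real (X i ⁻¹' Iio (log n / r))
        = (gammaMeasure (a i) r).real (Iio (log n / r)) :=
          (hX i).measureReal_eq (p := (· < log n / r)) measurableSet_Iio
      _ ≤ 1 - exp (-(r * (log n / r))) :=
          measureReal_gammaMeasure_Iio_le (ha i) hr (div_nonneg (log_nonneg hn) hr.le)
      _ = 1 - 1 / n := by
          rw [mul_div_cancel₀ _ hr.ne', exp_neg, exp_log (by linarith), inv_eq_one_div]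
  calc μ.real {ω | ⨆ i, X i ω < log n / r}
      = ∏ i, μ.real (X i ⁻¹' Iio (log n / r)) := hindep.measureReal_iSup_lt _
    _ ≤ ∏ _i : ι, (1 - 1 / (n : ℝ)) :=
        Finset.prod_le_prod (fun _ _ ↦ measureReal_nonneg) fun i _ ↦ htail i
    _ = (1 - 1 / (n : ℝ)) ^ n := by rw [Finset.prod_const, Finset.card_univ]
    _ ≤ exp (-1) := one_sub_div_pow_le_exp_neg hn

lemma measureReal_two_mul_mean_le_sum_le {a : ι → ℝ} {r : ℝ} (ha : ∀ i, 0 < a i) (hr : 0 < r)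
    {X : ι → Ω → ℝ} (hX : ∀ i, HasLaw (X i) (gammaMeasure (a i) r) μ) :
    μ.real {ω | 2 * ((∑ i, a i) / r) ≤ ∑ i, X i ω} ≤ 1 / 2 := by
  have hint (i : ι) : Integrable (X i) μ :=
    (integrable_map_measure aestronglyMeasurable_id (hX i).aemeasurable).1 <| by
      rw [(hX i).map_eq]; exact integrable_id_gammaMeasure (ha i) hr
  have hmean : ∫ ω, ∑ i, X i ω ∂μ = (∑ i, a i) / r := by
    rw [integral_finsetSum _ fun i _ ↦ hint i, Finset.sum_div]
    exact Finset.sum_congr rfl fun i _ ↦ by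
      rw [(hX i).integral_eq, integral_id_gammaMeasure (ha i) hr]
  have hnonneg : 0 ≤ᵐ[μ] fun ω ↦ ∑ i, X i ω := by
    filter_upwards [ae_all_iff.2 fun i ↦ (hX i).ae_nonneg_of_gammaMeasure] with ω hω
    exact Finset.sum_nonneg fun i _ ↦ hω i
  have hmarkov := mul_meas_ge_le_integral_of_nonneg hnonneg
    (integrable_finsetSum _ fun i _ ↦ hint i) (2 * ((∑ i, a i) / r))
  have hpos : 0 < (∑ i, a i) / r :=
    div_pos (Finset.sum_pos (fun i _ ↦ ha i) Finset.univ_nonempty) hr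
  rw [hmean] at hmarkov
  nlinarith

end ProbabilityTheory

/-- Lemma on the Erlang distribution (Lemma 2 / Appendix B of the paper): for independent
`X_i ∼ Erlang(k_i, λ)`, `𝔼[(max_i X_i)/(Σ_i X_i)] ≥ ((1/2 − e⁻¹)/2)·ln n / (Σ_i k_i)`. -/
theorem expected_max_over_sum_erlang
    {Ω : Type} [MeasurableSpace Ω] (Pr : Measure Ω) [IsProbabilityMeasure Pr]
    (n : ℕ) (hn : 1 ≤ n) (lam : ℝ) (hlam : 0 < lam)
    (k : Fin n → ℕ) (hk : ∀ i, 1 ≤ k i)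
    (X : Fin n → Ω → ℝ)
    (hindep : iIndepFun X Pr)
    (hlaw : ∀ i, Measure.map (X i) Pr = gammaMeasure (k i : ℝ) lam) :
    (∫ ω, (⨆ i : Fin n, X i ω) / (∑ i : Fin n, X i ω) ∂Pr) ≥
      ((1 / 2 - Real.exp (-1)) / 2) * Real.log n / (∑ i : Fin n, (k i : ℝ)) := by
  have : Nonempty (Fin n) := Fin.pos_iff_nonempty.mp hn
  have hk' (i : Fin n) : (1 : ℝ) ≤ k i := by exact_mod_cast hk i
  have hX (i : Fin n) : HasLaw (X i) (gammaMeasure (k i) lam) Pr := by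
    have := isProbabilityMeasure_gammaMeasure (by linarith [hk' i] : (0 : ℝ) < k i) hlam
    exact ⟨.of_map_ne_zero (by rw [hlaw i]; exact IsProbabilityMeasure.ne_zero _), hlaw i⟩
  have hmax := measureReal_iSup_lt_log_card_div_le hk' hlam hindep hX
  have hsum := measureReal_two_mul_mean_le_sum_le (fun i ↦ by linarith [hk' i]) hlam hX
  rw [Fintype.card_fin] at hmax
  have hMS : ∀ᵐ ω ∂Pr, 0 ≤ ⨆ i, X i ω ∧ ⨆ i, X i ω ≤ ∑ i, X i ω := by
    filter_upwards [ae_all_iff.2 fun i ↦ (hX i).ae_nonneg_of_gammaMeasure] with ω hω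
    exact ⟨Real.iSup_nonneg hω,
      ciSup_le fun i ↦ Finset.single_le_sum (fun j _ ↦ hω j) (Finset.mem_univ i)⟩
  have hK : 0 < ∑ i, (k i : ℝ) :=
    Finset.sum_pos (fun i _ ↦ by linarith [hk' i]) Finset.univ_nonempty
  rw [ge_iff_le]
  calc (1 / 2 - Real.exp (-1)) / 2 * Real.log n / ∑ i, (k i : ℝ)
      = Real.log n / lam / (2 * ((∑ i, (k i : ℝ)) / lam)) * (1 - Real.exp (-1) - 1 / 2) := by
        field_simp; ring
    _ ≤ Real.log n / lam / (2 * ((∑ i, (k i : ℝ)) / lam)) *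
          (1 - Pr.real {ω | ⨆ i, X i ω < Real.log n / lam}
            - Pr.real {ω | 2 * ((∑ i, (k i : ℝ)) / lam) ≤ ∑ i, X i ω}) := by
        gcongr
    _ ≤ _ := mul_one_sub_measureReal_le_integral_div
        (AEMeasurable.iSup fun i ↦ (hX i).aemeasurable)
        (Finset.aemeasurable_fun_sum _ fun i _ ↦ (hX i).aemeasurable) hMS (by positivity)
        (by positivity)
end
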